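/- arXiv:2312.16725 — 7 statements merged into one kernel-verified Lean document; each statement's English description precedes it below -/
import Mathlib

section
/- Let (S, T) be a metrizable topological space. Then S is homeomorphic to a Borel subset of a Polish space if and only if there exists a topology T' on S with T ⊆ T' (i.e., T' is finer than T) such that (S, T') is a Polish space. -/
/-!
A Borel subset of a Polish space becomes clopen, hence Polish, for a finer Polish topology on the
ambient space, and this finer topology can be transported along the homeomorphism. Conversely,
a metrizable space with a finer Polish topology is separable, so its completion is Polish, and
the image of the space in the completion is Borel by the Lusin–Souslin theorem, the inclusion
being injective and continuous for the finer Polish topology.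
-/

open Set TopologicalSpace UniformSpace

theorem MeasurableSet.exists_polishSpace_subtype_le {X : Type*} [TopologicalSpace X]
    [PolishSpace X] [MeasurableSpace X] [BorelSpace X] {A : Set X} (hA : MeasurableSet A) :
    ∃ t' : TopologicalSpace A, t' ≤ instTopologicalSpaceSubtype ∧ @PolishSpace A t' := by
  obtain ⟨t', ht', hP, hA_closed, -⟩ := hA.isClopenable
  exact ⟨_, induced_mono ht', @IsClosed.polishSpace X t' hP A hA_closed⟩

-- The finer topology stays packed in an existential hypothesis: a topology in the local context
-- would be picked up as an instance and clash with the given one.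
theorem Homeomorph.exists_polishSpace_le {X Y : Type*} [tX : TopologicalSpace X]
    [tY : TopologicalSpace Y] (e : X ≃ₜ Y)
    (h : ∃ t' : TopologicalSpace Y, t' ≤ tY ∧ @PolishSpace Y t') :
    ∃ t' : TopologicalSpace X, t' ≤ tX ∧ @PolishSpace X t' := by
  have htX := e.isInducing.eq_induced
  let f : X ≃ Y := e.toEquiv
  obtain ⟨t', ht', hP⟩ := h
  exact ⟨t'.induced f, le_of_le_of_eq (induced_mono ht') htX.symm, f.polishSpace_induced⟩

theorem TopologicalSpace.separableSpace_of_le {X : Type*} {t t' : TopologicalSpace X}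
    (ht' : t' ≤ t) (hs : @SeparableSpace X t') : @SeparableSpace X t :=
  @DenseRange.separableSpace X X t' hs t id (@denseRange_id X t) (continuous_id_of_le ht')

theorem UniformSpace.Completion.measurableSet_range_coe {X : Type*} [UniformSpace X] [T0Space X]
    [MeasurableSpace (Completion X)] [BorelSpace (Completion X)]
    (h : ∃ t' : TopologicalSpace X, t' ≤ UniformSpace.toTopologicalSpace ∧ @PolishSpace X t') :
    MeasurableSet (range ((↑) : X → Completion X)) := by
  have hc := Completion.continuous_coe X
  obtain ⟨t', ht', hP⟩ := h
  exact @MeasureTheory.measurableSet_range_of_continuous_injective X _ t' hP _ _ _ _ _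
    (continuous_le_dom ht' hc) (Completion.coe_injective X)

/-- A metrizable topological space `(S, T)` is homeomorphic to a Borel subset
of a Polish space if and only if there exists a finer topology `T'` on `S` (i.e. `T ⊆ T'`,
which in Mathlib's order on topologies reads `T' ≤ T`) such that `(S, T')` is Polish. -/
theorem statement0 {S : Type u} [t : TopologicalSpace S] [TopologicalSpace.MetrizableSpace S] :
    (∃ (S' : Type u) (ts : TopologicalSpace S') (A : Set S'),
        @PolishSpace S' ts ∧ @MeasurableSet S' (@borel S' ts) A ∧
          Nonempty (@Homeomorph S A t (@instTopologicalSpaceSubtype S' (· ∈ A) ts))) ↔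
      ∃ t' : TopologicalSpace S, t' ≤ t ∧ @PolishSpace S t' := by
  constructor
  · rintro ⟨S', ts, A, hS', hA, ⟨e⟩⟩
    let : MeasurableSpace S' := borel S'
    have : BorelSpace S' := ⟨rfl⟩
    exact e.exists_polishSpace_le hA.exists_polishSpace_subtype_le
  · intro h
    let := metrizableSpaceMetric S
    have : SeparableSpace S := by
      obtain ⟨t', ht', hP⟩ := h
      exact separableSpace_of_le ht' (@SecondCountableTopology.to_separableSpace S t' _)
    let : MeasurableSpace (Completion S) := borel _
    have : BorelSpace (Completion S) := ⟨rfl⟩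
    exact ⟨Completion S, inferInstance, range ((↑) : S → Completion S), inferInstance,
      Completion.measurableSet_range_coe h,
      ⟨(Completion.isUniformEmbedding_coe S).isEmbedding.toHomeomorph⟩⟩
end

section
/- Let S be a separable metric space. Then there exists a countable family F of continuous functions from S to [0,1] that is closed under pointwise multiplication and is convergence determining: for every sequence (x_n) in S and every x ∈ S, one has x_n → x if and only if f(x_n) → f(x) for every f ∈ F. -/
open Filter Topology

/-! Tent functions `x ↦ max 0 (1 - dist x c / r)` around the points `c` of a countable dense set
and radii `r = 1/(k+1)` already determine convergence: if `x₀` lies within `r` of `c`, the tent at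
`(c, r)` is positive at `x₀`, hence eventually positive along the sequence, which keeps the
sequence within `2r` of `x₀`. Adjoining all finite products of these countably many functions keeps
the family countable and `[0,1]`-valued. -/

theorem Set.Countable.submonoidClosure {M : Type*} [Monoid M] {s : Set M} (hs : s.Countable) :
    (Submonoid.closure s : Set M).Countable := by
  have := hs.to_subtype
  rw [Submonoid.closure_eq_mrange, MonoidHom.coe_mrange]
  exact Set.countable_range _

def continuousUnitIntervalValued (S : Type*) [TopologicalSpace S] : Submonoid (S → ℝ) where
  carrier := {f | Continuous f ∧ ∀ x, f x ∈ Set.Icc (0 : ℝ) 1}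
  mul_mem' hf hg := ⟨hf.1.mul hg.1, fun x => unitInterval.mul_mem (hf.2 x) (hg.2 x)⟩
  one_mem' := ⟨continuous_const, fun _ => unitInterval.one_mem⟩

section Tent

variable {S : Type*} [MetricSpace S]

noncomputable def tent (c : S) (r : ℝ) (x : S) : ℝ := max 0 (1 - dist x c / r)

theorem continuous_tent (c : S) (r : ℝ) : Continuous (tent c r) := by
  unfold tent
  fun_prop

theorem tent_mem_Icc (c : S) {r : ℝ} (hr : 0 ≤ r) (x : S) : tent c r x ∈ Set.Icc (0 : ℝ) 1 :=
  ⟨le_max_left _ _, max_le zero_le_one (sub_le_self _ (div_nonneg dist_nonneg hr))⟩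

theorem tent_pos_iff {c : S} {r : ℝ} (hr : 0 < r) {x : S} : 0 < tent c r x ↔ dist x c < r := by
  simp [tent, div_lt_one hr]

theorem tendsto_of_forall_tendsto_tent {α : Type*} {l : Filter α} {D : Set S} (hD : Dense D)
    {x : α → S} {x₀ : S}
    (h : ∀ c ∈ D, ∀ k : ℕ,
      Tendsto (fun n => tent c (1 / (k + 1)) (x n)) l (𝓝 (tent c (1 / (k + 1)) x₀))) :
    Tendsto x l (𝓝 x₀) := by
  refine Metric.tendsto_nhds.2 fun ε hε => ?_
  obtain ⟨k, hk⟩ := exists_nat_one_div_lt (half_pos hε)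
  set r : ℝ := 1 / (k + 1)
  have hr : 0 < r := Nat.one_div_pos_of_nat
  obtain ⟨c, hcD, hc⟩ := hD.exists_dist_lt x₀ hr
  have hx₀ : 0 < tent c r x₀ := (tent_pos_iff hr).2 hc
  filter_upwards [(h c hcD k).eventually (eventually_gt_nhds hx₀)] with n hn
  calc dist (x n) x₀ ≤ dist (x n) c + dist x₀ c := dist_triangle_right _ _ _
    _ < r + r := add_lt_add ((tent_pos_iff hr).1 hn) hc
    _ < ε := by linarith

end Tent

/-- Every separable metric space `S` admits a countable family `F` of continuous
`[0,1]`-valued functions that is closed under pointwise multiplication and convergence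
determining: a sequence `x_n` converges to `x` iff `f (x_n) → f x` for all `f ∈ F`. -/
theorem statement2 {S : Type*} [MetricSpace S] [TopologicalSpace.SeparableSpace S] :
    ∃ F : Set (S → ℝ),
      F.Countable ∧
      (∀ f ∈ F, Continuous f ∧ ∀ x, f x ∈ Set.Icc (0 : ℝ) 1) ∧
      (∀ f ∈ F, ∀ g ∈ F, (f * g) ∈ F) ∧
      (∀ (x : ℕ → S) (x₀ : S),
        Tendsto x atTop (nhds x₀) ↔
          ∀ f ∈ F, Tendsto (fun n => f (x n)) atTop (nhds (f x₀))) := by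
  obtain ⟨D, hDc, hD⟩ := TopologicalSpace.exists_countable_dense S
  have := hDc.to_subtype
  set tents : Set (S → ℝ) := Set.range fun p : D × ℕ => tent (p.1 : S) (1 / (p.2 + 1))
  have tents_le : Submonoid.closure tents ≤ continuousUnitIntervalValued S :=
    Submonoid.closure_le.2 <| Set.range_subset_iff.2 fun p =>
      ⟨continuous_tent _ _, tent_mem_Icc _ Nat.one_div_pos_of_nat.le⟩
  refine ⟨Submonoid.closure tents, (Set.countable_range _).submonoidClosure,
    fun f hf => tents_le hf, fun f hf g hg => mul_mem hf hg, fun x x₀ => ⟨?_, ?_⟩⟩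
  · exact fun hx f hf => ((tents_le hf).1.tendsto x₀).comp hx
  · exact fun h => tendsto_of_forall_tendsto_tent hD fun c hc k =>
      h _ (Submonoid.subset_closure ⟨(⟨c, hc⟩, k), rfl⟩)
end

section
/- Let S be a Lusin space, let λ := ½(Leb + δ_1) on [0,1], let μ be a Borel probability measure on [0,1] × S whose first marginal is λ, and let {φ_n : n ∈ ℕ} be a point-separating family of Borel functions φ_n : S → [0,1]. Then μ is an S-valued pseudo-path if and only if for every n ∈ ℕ the pushforward of μ under the map (t, s) ↦ (t, φ_n(s)), a Borel probability measure on [0,1] × [0,1], is a [0,1]-valued pseudo-path. -/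
open MeasureTheory
open scoped ENNReal NNReal

/-- The measure `λ = ½(Leb + δ₁)` on the unit interval `[0,1]`. -/
noncomputable def lambdaMZ : Measure unitInterval :=
  (1 / 2 : ℝ≥0∞) • ((volume : Measure ℝ).comap Subtype.val)
    + (1 / 2 : ℝ≥0∞) • Measure.dirac 1

/-- An `E`-valued pseudo-path: a measure on `[0,1] × E` of the form `(id, g)_# λ` for some
Borel function `g : [0,1] → E`. -/
def IsPseudoPath {E : Type*} [MeasurableSpace E] (μ : Measure (unitInterval × E)) : Prop :=
  ∃ g : unitInterval → E, Measurable g ∧ μ = Measure.map (fun t => (t, g t)) lambdaMZ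
/-! If every pushforward is a pseudo-path with graph function `g n`, then `φ n s = g n t` for
`μ`-a.e. `(t, s)`, hence `Φ s = G t` a.e. for the injective Borel map `Φ = (φ n)ₙ : S → [0,1]^ℕ`
and `G = (g n)ₙ`. As `S` is Lusin, `Φ` is a measurable embedding (Lusin–Souslin), so it has a
Borel left inverse `r`, and `μ` is concentrated on the graph of `r ∘ G`. -/

open Function

theorem Measurable.measurableEmbedding_of_le_borel {S T : Type*} [TopologicalSpace S]
    [PolishSpace S] [MeasurableSpace T] [MeasurableSpace.CountablySeparated T]
    {m : MeasurableSpace S} (hm : m ≤ borel S) {Φ : S → T} (hΦ : Measurable[m] Φ)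
    (hinj : Injective Φ) : @MeasurableEmbedding S T m _ Φ := by
  have hb : @MeasurableEmbedding S T (borel S) _ Φ := by
    let _ : MeasurableSpace S := borel S
    have : BorelSpace S := ⟨rfl⟩
    exact (hΦ.mono hm le_rfl).measurableEmbedding hinj
  exact ⟨hinj, hΦ, fun s hs =>
    @MeasurableEmbedding.measurableSet_image' S T (borel S) _ Φ hb s (hm s hs)⟩

theorem MeasurableEmbedding.exists_measurable_leftInverse {α β : Type*} [MeasurableSpace α]
    [MeasurableSpace β] [Nonempty α] {f : α → β} (hf : MeasurableEmbedding f) :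
    ∃ r : β → α, Measurable r ∧ LeftInverse r f := by
  obtain ⟨r, hr, hrf⟩ := hf.exists_measurable_extend measurable_id fun _ => ‹Nonempty α›
  exact ⟨r, hr, congrFun hrf⟩

section PseudoPath

variable {E F : Type*} [MeasurableSpace E] [MeasurableSpace F]

theorem IsPseudoPath.map_snd {μ : Measure (unitInterval × E)} (hμ : IsPseudoPath μ) {f : E → F}
    (hf : Measurable f) : IsPseudoPath (μ.map fun p => (p.1, f p.2)) := by
  obtain ⟨g, hg, rfl⟩ := hμ
  refine ⟨f ∘ g, hf.comp hg, ?_⟩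
  have hfst : Measurable fun p : unitInterval × E => (p.1, f p.2) :=
    measurable_fst.prodMk (hf.comp measurable_snd)
  have hgraph : Measurable fun t : unitInterval => (t, g t) := measurable_id.prodMk hg
  rw [Measure.map_map hfst hgraph]
  rfl

theorem ae_snd_eq_of_map_eq_map_graph [MeasurableEq F] {X : Type*} [MeasurableSpace X]
    {μ : Measure (X × E)} {ν : Measure X} {f : E → F} {g : X → F} (hf : Measurable f)
    (hg : Measurable g) (h : μ.map (fun p => (p.1, f p.2)) = ν.map fun x => (x, g x)) :
    ∀ᵐ p ∂μ, f p.2 = g p.1 := by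
  have hset : MeasurableSet {q : X × F | q.2 = g q.1} :=
    measurableSet_eq_fun measurable_snd (hg.comp measurable_fst)
  have hgraph : ∀ᵐ q ∂(ν.map fun x => (x, g x)), q.2 = g q.1 :=
    (ae_map_iff (measurable_id.prodMk hg).aemeasurable hset).2 (ae_of_all _ fun _ => rfl)
  rw [← h] at hgraph
  exact (ae_map_iff (measurable_fst.prodMk (hf.comp measurable_snd)).aemeasurable hset).1 hgraph

theorem isPseudoPath_of_ae_snd_eq {μ : Measure (unitInterval × E)}
    (hmarg : μ.map Prod.fst = lambdaMZ) {g : unitInterval → E} (hg : Measurable g)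
    (h : ∀ᵐ p ∂μ, p.2 = g p.1) : IsPseudoPath μ := by
  refine ⟨g, hg, ?_⟩
  calc μ = μ.map fun p => (p.1, g p.1) := by
        conv_lhs => rw [← Measure.map_id (μ := μ)]
        exact Measure.map_congr (h.mono fun p hp => Prod.ext rfl hp)
    _ = (μ.map Prod.fst).map fun t => (t, g t) :=
        (Measure.map_map (measurable_id.prodMk hg) measurable_fst).symm
    _ = lambdaMZ.map fun t => (t, g t) := by rw [hmarg]

end PseudoPath

theorem statement8_general {S : Type*} [ts : TopologicalSpace S] [MeasurableSpace S] [BorelSpace S]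
    (hLusin : ∃ t' : TopologicalSpace S, t' ≤ ts ∧ @PolishSpace S t')
    (μ : Measure (unitInterval × S)) [IsProbabilityMeasure μ]
    (hmarg : μ.map Prod.fst = lambdaMZ)
    (φ : ℕ → S → unitInterval) (hφ : ∀ n, Measurable (φ n))
    (hsep : ∀ x y : S, x = y ↔ ∀ n, φ n x = φ n y) :
    IsPseudoPath μ ↔
      ∀ n, IsPseudoPath (μ.map (fun p : unitInterval × S => (p.1, φ n p.2))) := by
  refine ⟨fun hμ n => hμ.map_snd (hφ n), fun h => ?_⟩
  choose g hg hgμ using h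
  set Φ : S → ℕ → unitInterval := fun s n => φ n s
  have hΦ : MeasurableEmbedding Φ := by
    obtain ⟨t', hle, ht'⟩ := hLusin
    have hm : ‹MeasurableSpace S› ≤ @borel S t' :=
      (@BorelSpace.measurable_eq S ts _ _).trans_le (borel_anti hle)
    exact @Measurable.measurableEmbedding_of_le_borel S _ t' ht' _ _ _ hm Φ
      (measurable_pi_lambda _ hφ) fun x y hxy => (hsep x y).2 (congrFun hxy)
  have : Nonempty S := (Measure.nonempty_of_neZero μ).map Prod.snd
  obtain ⟨r, hr, hrΦ⟩ := hΦ.exists_measurable_leftInverse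
  have hae : ∀ᵐ p ∂μ, Φ p.2 = fun n => g n p.1 :=
    (ae_all_iff.2 fun n => ae_snd_eq_of_map_eq_map_graph (hφ n) (hg n) (hgμ n)).mono
      fun p hp => funext hp
  refine isPseudoPath_of_ae_snd_eq hmarg (hr.comp (measurable_pi_lambda _ hg)) ?_
  filter_upwards [hae] with p hp
  rw [comp_apply, ← hp, hrΦ]

/-- Let `S` be a Lusin space, `μ` a Borel probability measure on `[0,1] × S`
with first marginal `λ = ½(Leb + δ₁)`, and `(φ n)` a point-separating family of Borel functions
`S → [0,1]`. Then `μ` is an `S`-valued pseudo-path iff for every `n` the pushforward of `μ`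
under `(t, s) ↦ (t, φ n s)` is a `[0,1]`-valued pseudo-path. -/
theorem statement8 {S : Type*} [ts : TopologicalSpace S] [TopologicalSpace.MetrizableSpace S]
    [MeasurableSpace S] [BorelSpace S]
    (hLusin : ∃ t' : TopologicalSpace S, t' ≤ ts ∧ @PolishSpace S t')
    (μ : Measure (unitInterval × S)) [IsProbabilityMeasure μ]
    (hmarg : μ.map Prod.fst = lambdaMZ)
    (φ : ℕ → S → unitInterval) (hφ : ∀ n, Measurable (φ n))
    (hsep : ∀ x y : S, x = y ↔ ∀ n, φ n x = φ n y) :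
    IsPseudoPath μ ↔
      ∀ n, IsPseudoPath (μ.map (fun p : unitInterval × S => (p.1, φ n p.2))) :=
  statement8_general (ts := ts) hLusin μ hmarg φ hφ hsep
end

section
/- Let S be a Lusin space with a compatible metric d, let λ := ½(Leb + δ_1) on [0,1], let {φ_n : n ∈ ℕ} be a countable convergence determining family of functions φ_n : S → [0,1], and let f_k, f : [0,1] → S be Borel functions (k ∈ ℕ). Then f_k → f in λ-measure if and only if for every n ∈ ℕ the functions φ_n ∘ f_k converge to φ_n ∘ f in λ-measure. -/
open MeasureTheory Filter
open scoped ENNReal NNReal Topology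

instance : IsFiniteMeasure lambdaMZ := by
  have : IsFiniteMeasure ((volume : Measure ℝ).comap ((↑) : unitInterval → ℝ)) := by
    constructor
    rw [(MeasurableEmbedding.subtype_coe measurableSet_Icc).comap_apply, Set.image_univ,
      Subtype.range_coe, Real.volume_Icc]
    exact ENNReal.ofReal_lt_top
  constructor
  simp [lambdaMZ, ENNReal.mul_lt_top, measure_lt_top]

def IsConvergenceDetermining {X Y ι : Type*} [TopologicalSpace X] [TopologicalSpace Y]
    (φ : ι → X → Y) : Prop :=
  ∀ (x : ℕ → X) (x₀ : X),
    Tendsto x atTop (𝓝 x₀) ↔ ∀ n, Tendsto (fun m => φ n (x m)) atTop (𝓝 (φ n x₀))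

namespace IsConvergenceDetermining

variable {X Y ι : Type*} [TopologicalSpace X] [SequentialSpace X] [TopologicalSpace Y]
  {φ : ι → X → Y}

theorem continuous (hφ : IsConvergenceDetermining φ) (n : ι) : Continuous (φ n) :=
  continuous_iff_seqContinuous.mpr fun _ _ hx => (hφ _ _).mp hx n

theorem isInducing [FirstCountableTopology Y] [Countable ι] (hφ : IsConvergenceDetermining φ) :
    Topology.IsInducing (fun x n => φ n x) := by
  refine Topology.isInducing_iff_nhds.mpr fun x =>
    le_antisymm ((continuous_pi hφ.continuous).tendsto x).le_comap ?_
  refine tendsto_id'.mp (tendsto_iff_seq_tendsto.mpr fun u hu => ?_)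
  exact (hφ u x).mpr (tendsto_pi_nhds.mp (tendsto_comap_iff.mp hu))

end IsConvergenceDetermining

section TendstoInMeasure

variable {α E F : Type*} [MeasurableSpace α] {μ : Measure α}

theorem exists_seq_tendsto_ae_of_forall_tendstoInMeasure [PseudoEMetricSpace E]
    {f : ℕ → ℕ → α → E} {g : ℕ → α → E} (hfg : ∀ n, TendstoInMeasure μ (f n) atTop (g n)) :
    ∃ ns : ℕ → ℕ, StrictMono ns ∧
      ∀ᵐ x ∂μ, ∀ n, Tendsto (fun i => f n (ns i) x) atTop (𝓝 (g n x)) := by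
  have hpos : ∀ j : ℕ, (0 : ℝ≥0∞) < 2⁻¹ ^ j := fun j => ENNReal.pow_pos (by simp) j
  -- A diagonal choice: at stage `j` the first `j + 1` sequences are controlled at scale `2⁻ʲ`.
  set bad : ℕ → ℕ → Set α := fun j k =>
    ⋃ n ∈ Finset.range (j + 1), {x | 2⁻¹ ^ j ≤ edist (f n k x) (g n x)}
  have hbad : ∀ j, ∀ᶠ k in atTop, μ (bad j k) ≤ 2⁻¹ ^ j := by
    intro j
    have hsum : Tendsto (fun k => ∑ n ∈ Finset.range (j + 1),
        μ {x | 2⁻¹ ^ j ≤ edist (f n k x) (g n x)}) atTop (𝓝 0) := by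
      simpa using tendsto_finsetSum _ fun n _ => hfg n _ (hpos j)
    filter_upwards [hsum.eventually (ge_mem_nhds (hpos j))] with k hk
    exact (measure_biUnion_finset_le _ _).trans hk
  obtain ⟨ns, hns, hμ⟩ := extraction_forall_of_eventually hbad
  have hμsum : ∑' j, μ (bad j (ns j)) ≠ ∞ :=
    ne_top_of_le_ne_top (by simp [ENNReal.tsum_geometric]) (ENNReal.tsum_le_tsum hμ)
  refine ⟨ns, hns, ?_⟩
  filter_upwards [ae_eventually_notMem hμsum] with x hx n
  have hle : ∀ᶠ j in atTop, edist (f n (ns j) x) (g n x) ≤ 2⁻¹ ^ j := by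
    filter_upwards [hx, eventually_ge_atTop n] with j hj hnj
    simp only [bad, Set.mem_iUnion, Set.mem_ofPred_eq, Finset.mem_range, not_exists,
      not_le] at hj
    exact (hj n (Nat.lt_succ_of_le hnj)).le
  exact tendsto_iff_edist_tendsto_0.mpr <| tendsto_of_tendsto_of_tendsto_of_le_of_le'
    tendsto_const_nhds (ENNReal.tendsto_pow_atTop_nhds_zero_of_lt_one (by norm_num))
    (Eventually.of_forall fun _ => zero_le) hle

variable [IsFiniteMeasure μ] [PseudoEMetricSpace E] [PseudoEMetricSpace F]

theorem TendstoInMeasure.comp_continuous {f : ℕ → α → E} {g : α → E}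
    (hfg : TendstoInMeasure μ f atTop g) {φ : E → F} (hφ : Continuous φ)
    (hφf : ∀ n, AEStronglyMeasurable (fun x => φ (f n x)) μ) :
    TendstoInMeasure μ (fun n x => φ (f n x)) atTop (fun x => φ (g x)) :=
  (exists_seq_tendstoInMeasure_atTop_iff hφf).mpr fun ns hns => by
    obtain ⟨ms, hms, hae⟩ := (hfg.comp hns.tendsto_atTop).exists_seq_tendsto_ae
    exact ⟨ms, hms, hae.mono fun x hx => (hφ.tendsto _).comp hx⟩

theorem tendstoInMeasure_of_forall_tendstoInMeasure_comp {φ : ℕ → E → F}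
    (hφ : ∀ (x : ℕ → E) (x₀ : E),
      (∀ n, Tendsto (fun m => φ n (x m)) atTop (𝓝 (φ n x₀))) → Tendsto x atTop (𝓝 x₀))
    {f : ℕ → α → E} {g : α → E} (hf : ∀ k, AEStronglyMeasurable (f k) μ)
    (h : ∀ n, TendstoInMeasure μ (fun k x => φ n (f k x)) atTop (fun x => φ n (g x))) :
    TendstoInMeasure μ f atTop g :=
  (exists_seq_tendstoInMeasure_atTop_iff hf).mpr fun ns hns => by
    obtain ⟨ms, hms, hae⟩ := exists_seq_tendsto_ae_of_forall_tendstoInMeasure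
      fun n => (h n).comp hns.tendsto_atTop
    exact ⟨ms, hms, hae.mono fun x hx => hφ _ _ hx⟩

end TendstoInMeasure

theorem statement9_general {S : Type*} [MetricSpace S] [MeasurableSpace S] [BorelSpace S]
    (φ : ℕ → S → ℝ)
    (hconvdet : ∀ (x : ℕ → S) (x₀ : S),
      Tendsto x atTop (nhds x₀) ↔
        ∀ n, Tendsto (fun m => φ n (x m)) atTop (nhds (φ n x₀)))
    (fk : ℕ → unitInterval → S) (f : unitInterval → S)
    (hfk : ∀ k, Measurable (fk k)) :
    TendstoInMeasure lambdaMZ fk atTop f ↔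
      ∀ n, TendstoInMeasure lambdaMZ (fun k t => φ n (fk k t)) atTop (fun t => φ n (f t)) := by
  have hφ : IsConvergenceDetermining φ := hconvdet
  have : SecondCountableTopology S := hφ.isInducing.secondCountableTopology
  constructor
  · exact fun h n => TendstoInMeasure.comp_continuous h (hφ.continuous n) fun k =>
      ((hφ.continuous n).measurable.comp (hfk k)).aestronglyMeasurable
  · exact tendstoInMeasure_of_forall_tendstoInMeasure_comp (fun x x₀ => (hφ x x₀).mpr)
      fun k => (hfk k).aestronglyMeasurable

/-- Let `S` be a Lusin space with a compatible metric, `(φ n)` a countable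
convergence determining family of `[0,1]`-valued functions on `S`, and `f_k, f : [0,1] → S`
Borel. Then `f_k → f` in `λ`-measure iff `φ n ∘ f_k → φ n ∘ f` in `λ`-measure for all `n`. -/
theorem statement9 {S : Type*} [MetricSpace S] [MeasurableSpace S] [BorelSpace S]
    (hLusin : TopologicalSpace.MetrizableSpace S ∧
      ∃ t' : TopologicalSpace S, t' ≤ (inferInstance : TopologicalSpace S) ∧ @PolishSpace S t')
    (φ : ℕ → S → ℝ) (hφ01 : ∀ n x, φ n x ∈ Set.Icc (0 : ℝ) 1)
    (hconvdet : ∀ (x : ℕ → S) (x₀ : S),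
      Tendsto x atTop (nhds x₀) ↔
        ∀ n, Tendsto (fun m => φ n (x m)) atTop (nhds (φ n x₀)))
    (fk : ℕ → unitInterval → S) (f : unitInterval → S)
    (hfk : ∀ k, Measurable (fk k)) (hf : Measurable f) :
    TendstoInMeasure lambdaMZ fk atTop f ↔
      ∀ n, TendstoInMeasure lambdaMZ (fun k t => φ n (fk k t)) atTop (fun t => φ n (f t)) :=
  statement9_general φ hconvdet fk f hfk
end

section
/- Let S be a Lusin space, let X and Y be S-valued random variables on a probability space (Ω, F, P), let G ⊆ F be a sub-σ-algebra, and let κ : Ω → P(S) be a regular conditional distribution of X given G. If κ(ω) = δ_{Y(ω)} for P-almost every ω ∈ Ω, then X = Y P-almost surely. -/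
open MeasureTheory
open scoped ENNReal NNReal

/-!
For a Borel set `A`, the event `B = {κ(·)(A) = 1}` is `G`-measurable, and the defining property of
`κ` gives `P(B ∩ {X ∈ A}) = ∫_B κ(·)(A) dP = P(B)`, so `X ∈ A` almost surely on `B`. When
`κ = δ_Y`, `B` is `{Y ∈ A}`; applying this to `A` and `Aᶜ` gives `{X ∈ A} = {Y ∈ A}` almost surely.
A metrizable Lusin space is separable, so countably many Borel sets separate its points, and
these countably many almost sure equalities force `X = Y` almost surely.
-/

/-- `κ : Ω → P(S)` is a regular conditional distribution of `X : Ω → S` given the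
sub-σ-algebra `G`: `ω ↦ κ ω A` is `G`-measurable for every Borel `A`, and
`∫_B κ ω A dP(ω) = P(B ∩ {X ∈ A})` for every `B ∈ G` and Borel `A`. -/
def IsRegCondDistrib (Ω S : Type*) [MeasurableSpace Ω] [MeasurableSpace S]
    (P : Measure Ω) (X : Ω → S) (G : MeasurableSpace Ω)
    (κ : Ω → ProbabilityMeasure S) : Prop :=
  (∀ A : Set S, MeasurableSet A → Measurable[G] fun ω => κ ω A) ∧
  (∀ B : Set Ω, MeasurableSet[G] B → ∀ A : Set S, MeasurableSet A →
    ∫⁻ ω in B, (κ ω A : ℝ≥0∞) ∂P = P (B ∩ X ⁻¹' A))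

theorem TopologicalSpace.SeparableSpace.of_le {S : Type*} {t t' : TopologicalSpace S}
    (hle : t' ≤ t) (h : @SeparableSpace S t') : @SeparableSpace S t :=
  @DenseRange.separableSpace S S t' h t id (by simp [DenseRange]) (continuous_id_of_le hle)

namespace IsRegCondDistrib

variable {Ω S : Type*} {mΩ : MeasurableSpace Ω} [MeasurableSpace S] {P : Measure Ω}
  [IsFiniteMeasure P] {X : Ω → S} {G : MeasurableSpace Ω} {κ : Ω → ProbabilityMeasure S}

theorem ae_mem_of_apply_eq_one (hκ : @IsRegCondDistrib Ω S mΩ _ P X G κ) (hG : G ≤ mΩ)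
    (hX : Measurable[mΩ] X) {A : Set S} (hA : MeasurableSet A) :
    ∀ᵐ ω ∂P, κ ω A = 1 → X ω ∈ A := by
  set B := {ω | κ ω A = 1}
  have hBG : MeasurableSet[G] B := hκ.1 A hA (measurableSet_singleton 1)
  have hB_inter : P (B ∩ X ⁻¹' A) = P B := by
    rw [← hκ.2 B hBG A hA, setLIntegral_congr_fun (μ := P) (hG B hBG) (g := fun _ ↦ 1)
      (fun ω (hω : κ ω A = 1) ↦ by simp [hω]), setLIntegral_one]
  have hB_diff : P (B \ X ⁻¹' A) = 0 := by
    rw [← Set.sdiff_self_inter, measure_sdiff (μ := P) Set.inter_subset_left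
      ((hG B hBG).inter (hX hA)).nullMeasurableSet (measure_ne_top _ _), hB_inter, tsub_self]
  filter_upwards [measure_eq_zero_iff_ae_notMem.mp hB_diff] with ω hω hωB
  by_contra hωX
  exact hω ⟨hωB, hωX⟩

theorem ae_eq_of_ae_eq_dirac [MeasurableSpace.CountablySeparated S]
    (hκ : @IsRegCondDistrib Ω S mΩ _ P X G κ) (hG : G ≤ mΩ) (hX : Measurable[mΩ] X) {Y : Ω → S}
    (hdirac : ∀ᵐ ω ∂P, (κ ω : Measure S) = Measure.dirac (Y ω)) :
    X =ᵐ[P] Y := by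
  have apply_eq_one_iff {ω} (hω : (κ ω : Measure S) = Measure.dirac (Y ω)) {A : Set S}
      (hA : MeasurableSet A) : κ ω A = 1 ↔ Y ω ∈ A := by
    rw [← ENNReal.coe_eq_one, ProbabilityMeasure.ennreal_coeFn_eq_coeFn_toMeasure, hω,
      Measure.dirac_apply' _ hA]
    by_cases h : Y ω ∈ A <;> simp [h]
  refine Filter.EventuallyEq.of_forall_separating_mem_iff MeasurableSet fun A hA ↦ ?_
  filter_upwards [hdirac, hκ.ae_mem_of_apply_eq_one hG hX hA,
    hκ.ae_mem_of_apply_eq_one hG hX hA.compl] with ω hω hXA hXAc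
  exact ⟨fun hx ↦ by_contra fun hy ↦ hXAc ((apply_eq_one_iff hω hA.compl).2 hy) hx,
    fun hy ↦ hXA ((apply_eq_one_iff hω hA).2 hy)⟩

end IsRegCondDistrib

theorem statement15_general {S : Type*} [ts : TopologicalSpace S]
    [TopologicalSpace.MetrizableSpace S] [MeasurableSpace S] [BorelSpace S]
    (hLusin : ∃ t' : TopologicalSpace S, t' ≤ ts ∧ @PolishSpace S t')
    {Ω : Type*} [mΩ : MeasurableSpace Ω] (P : Measure Ω) [IsProbabilityMeasure P]
    (X Y : Ω → S) (hX : Measurable X)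
    (G : MeasurableSpace Ω) (hG : G ≤ mΩ)
    (κ : Ω → ProbabilityMeasure S)
    (hκ : @IsRegCondDistrib Ω S mΩ _ P X G κ)
    (hdirac : ∀ᵐ ω ∂P, (κ ω : Measure S) = Measure.dirac (Y ω)) :
    X =ᵐ[P] Y := by
  have : TopologicalSpace.SeparableSpace S := by
    obtain ⟨t', hle, hpolish⟩ := hLusin
    exact .of_le hle inferInstance
  let := TopologicalSpace.metrizableSpaceMetric S
  have : SecondCountableTopology S := UniformSpace.secondCountable_of_separable S
  exact hκ.ae_eq_of_ae_eq_dirac hG hX hdirac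

/-- Let `S` be a Lusin space, `X, Y` `S`-valued random variables on `(Ω, F, P)`,
`G ⊆ F` a sub-σ-algebra and `κ` a regular conditional distribution of `X` given `G`. If
`κ ω = δ_{Y ω}` for `P`-almost every `ω`, then `X = Y` `P`-almost surely. -/
theorem statement15 {S : Type*} [ts : TopologicalSpace S]
    [TopologicalSpace.MetrizableSpace S] [MeasurableSpace S] [BorelSpace S]
    (hLusin : ∃ t' : TopologicalSpace S, t' ≤ ts ∧ @PolishSpace S t')
    {Ω : Type*} [mΩ : MeasurableSpace Ω] (P : Measure Ω) [IsProbabilityMeasure P]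
    (X Y : Ω → S) (hX : Measurable X) (hY : Measurable Y)
    (G : MeasurableSpace Ω) (hG : G ≤ mΩ)
    (κ : Ω → ProbabilityMeasure S)
    (hκ : @IsRegCondDistrib Ω S mΩ _ P X G κ)
    (hdirac : ∀ᵐ ω ∂P, (κ ω : Measure S) = Measure.dirac (Y ω)) :
    X =ᵐ[P] Y :=
  statement15_general (ts := ts) hLusin (mΩ := mΩ) P X Y hX G hG κ hκ hdirac
end

section
/- Let S be a separable metric space and let f : [0,1] → S be a function such that for every t ∈ [0,1) the right limit lim_{s ↓ t} f(s) exists in S. Then the set of points of [0,1] at which f is discontinuous is at most countable. -/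
/-!
If `f s → y` as `s ↓ t`, then on some interval `(t, t + δ)` the values of `f` stay within `ε / 2`
of `y`, so `f` jumps by less than `ε` at every point of that interval. Hence the set of points at
which `f` jumps by at least `ε` is isolated on the right within itself, and such a set is
countable in a second-countable linear order. The discontinuity set is the union of these sets
over `ε = 1 / (n + 1)`.
-/

open Filter Set Topology

section JumpSet

variable {X S : Type*} [TopologicalSpace X] [PseudoMetricSpace S]

def jumpSet (f : X → S) (ε : ℝ) : Set X :=
  {x | ∃ᶠ z in 𝓝 x, ε ≤ dist (f z) (f x)}

theorem setOf_not_continuousAt_subset_iUnion_jumpSet (f : X → S) :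
    {x | ¬ContinuousAt f x} ⊆ ⋃ n : ℕ, jumpSet f (1 / (n + 1)) := by
  intro x hx
  obtain ⟨ε, hε, hjump⟩ : ∃ ε > 0, ∃ᶠ z in 𝓝 x, ε ≤ dist (f z) (f x) := by
    simpa [ContinuousAt, Metric.tendsto_nhds, Filter.not_eventually] using hx
  obtain ⟨n, hn⟩ := exists_nat_one_div_lt hε
  exact mem_iUnion.2 ⟨n, hjump.mono fun z hz => hn.le.trans hz⟩

theorem eventually_notMem_jumpSet_of_tendsto {f : X → S} {s : Set X} (hs : IsOpen s) {x : X}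
    {y : S} (hf : Tendsto f (𝓝[s] x) (𝓝 y)) {ε : ℝ} (hε : 0 < ε) :
    ∀ᶠ z in 𝓝[s] x, z ∉ jumpSet f ε := by
  have hclose : ∀ᶠ z in 𝓝[s] x, dist (f z) y < ε / 2 :=
    Metric.tendsto_nhds.1 hf _ (half_pos hε)
  filter_upwards [eventually_eventually_nhdsWithin.2 hclose, hclose, self_mem_nhdsWithin]
    with z hnear hz hzs
  rw [hs.nhdsWithin_eq hzs] at hnear
  simp only [jumpSet, mem_ofPred_eq, not_frequently, not_le]
  filter_upwards [hnear] with w hw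
  calc dist (f w) (f z) ≤ dist (f w) y + dist (f z) y := dist_triangle_right _ _ _
    _ < ε / 2 + ε / 2 := add_lt_add hw hz
    _ = ε := add_halves ε

end JumpSet

section RightLimits

variable {X S : Type*} [TopologicalSpace X] [LinearOrder X] [OrderTopology X]
  [SecondCountableTopology X] [PseudoMetricSpace S]

theorem countable_jumpSet_of_forall_tendsto_nhdsGT {f : X → S}
    (hf : ∀ x, ∃ y, Tendsto f (𝓝[>] x) (𝓝 y)) {ε : ℝ} (hε : 0 < ε) :
    (jumpSet f ε).Countable := by
  refine (countable_setOfPred_isolated_right_within (s := jumpSet f ε)).mono fun x hx => ?_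
  obtain ⟨y, hy⟩ := hf x
  refine ⟨hx, ?_⟩
  rw [inter_comm, nhdsWithin_inter', inf_principal_eq_bot]
  exact eventually_notMem_jumpSet_of_tendsto isOpen_Ioi hy hε

theorem countable_setOf_not_continuousAt_of_forall_tendsto_nhdsGT {f : X → S}
    (hf : ∀ x, ∃ y, Tendsto f (𝓝[>] x) (𝓝 y)) :
    {x | ¬ContinuousAt f x}.Countable :=
  (countable_iUnion fun _ => countable_jumpSet_of_forall_tendsto_nhdsGT hf
    Nat.one_div_pos_of_nat).mono (setOf_not_continuousAt_subset_iUnion_jumpSet f)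

end RightLimits

theorem statement18_general {S : Type*} [MetricSpace S]
    (f : unitInterval → S)
    (hright : ∀ t : unitInterval, t < 1 →
      ∃ y : S, Tendsto f (nhdsWithin t (Set.Ioi t)) (nhds y)) :
    Set.Countable {t : unitInterval | ¬ ContinuousAt f t} := by
  refine countable_setOf_not_continuousAt_of_forall_tendsto_nhdsGT fun t => ?_
  by_cases ht : t < 1
  · exact hright t ht
  · have htop : IsTop t := fun u => unitInterval.le_one'.trans (not_lt.1 ht)
    exact ⟨f t, by simp [nhdsGT_eq_bot_iff.2 (Or.inl htop)]⟩

/-- Let `S` be a separable metric space and `f : [0,1] → S` a function such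
that at every `t ∈ [0,1)` the right limit `lim_{s ↓ t} f(s)` exists. Then the set of points of
`[0,1]` at which `f` is discontinuous is at most countable. -/
theorem statement18 {S : Type*} [MetricSpace S] [TopologicalSpace.SeparableSpace S]
    (f : unitInterval → S)
    (hright : ∀ t : unitInterval, t < 1 →
      ∃ y : S, Tendsto f (nhdsWithin t (Set.Ioi t)) (nhds y)) :
    Set.Countable {t : unitInterval | ¬ ContinuousAt f t} :=
  statement18_general f hright
end

section
/- Let S_1 be a separable metrizable topological space and S_2 a Polish space. If there exists a continuous map f : S_1 → S_2 such that f⁻¹(K) is compact in S_1 for every compact K ⊆ S_2, then S_1 is a Polish space. -/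
/-!
Embed `S₁` into a Polish space `P` (the completion of a compatible metric) and pair this
embedding with `f`. Compactness of the preimages makes `f` proper, hence so is the injective map
`x ↦ (e x, f x)`, which is then a closed embedding of `S₁` into the Polish space `P × S₂`.
-/

open Topology TopologicalSpace

universe u

theorem exists_isEmbedding_polishSpace (X : Type u) [TopologicalSpace X] [MetrizableSpace X]
    [SeparableSpace X] :
    ∃ (P : Type u) (_ : TopologicalSpace P) (_ : PolishSpace P) (e : X → P), IsEmbedding e := by
  let := metrizableSpaceMetric X
  have : SecondCountableTopology (UniformSpace.Completion X) :=
    UniformSpace.secondCountable_of_separable _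
  exact ⟨UniformSpace.Completion X, inferInstance, inferInstance, _,
    UniformSpace.Completion.isUniformEmbedding_coe X |>.isEmbedding⟩

theorem Continuous.isProperMap_prodMk {X Y P : Type*} [TopologicalSpace X] [TopologicalSpace Y]
    [TopologicalSpace P] [T2Space Y] [T2Space P] {f : X → Y} {e : X → P} (he : Continuous e)
    (hf : IsProperMap f) : IsProperMap fun x ↦ (e x, f x) :=
  isProperMap_of_comp_of_t2 (he.prodMk hf.continuous) continuous_snd hf

theorem PolishSpace.of_isProperMap {X Y : Type*} [TopologicalSpace X] [MetrizableSpace X]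
    [SeparableSpace X] [TopologicalSpace Y] [PolishSpace Y] {f : X → Y} (hf : IsProperMap f) :
    PolishSpace X := by
  obtain ⟨P, _, _, e, he⟩ := exists_isEmbedding_polishSpace X
  have hg := he.continuous.isProperMap_prodMk hf
  exact (IsClosedEmbedding.of_continuous_injective_isClosedMap hg.continuous
    (fun _ _ h ↦ he.injective congr(Prod.fst $h)) hg.isClosedMap).polishSpace

/-- Let `S₁` be a separable metrizable space and `S₂` a Polish space. If there
is a continuous map `f : S₁ → S₂` such that preimages of compact sets are compact, then `S₁` is
Polish. -/
theorem statement19 {S₁ S₂ : Type*} [TopologicalSpace S₁]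
    [TopologicalSpace.MetrizableSpace S₁] [TopologicalSpace.SeparableSpace S₁]
    [TopologicalSpace S₂] [PolishSpace S₂]
    (h : ∃ f : S₁ → S₂, Continuous f ∧ ∀ K : Set S₂, IsCompact K → IsCompact (f ⁻¹' K)) :
    PolishSpace S₁ := by
  obtain ⟨f, hf, hK⟩ := h
  -- `S₂` is first countable, hence compactly generated, so compact preimages suffice for properness.
  exact PolishSpace.of_isProperMap (isProperMap_iff_isCompact_preimage.2 ⟨hf, fun K ↦ hK K⟩)
end
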